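/- arXiv:1512.01514 — 3 statements merged into one kernel-verified Lean document; each statement's English description precedes it below -/
import Mathlib

section
/- Let h_m be the Heisenberg Lie algebra of dimension 2m+1 and D the derivation defined by D(x_i)=x_{i+1} (i<m), D(y_i)=-y_{i-1} (i>1), zero otherwise. Then the semidirect product n = ℝD ⋉ h_m is a nilpotent Lie algebra of dimension 2m+2 which is exactly (m+1)-step nilpotent: n^{m+1} = 0 and n^m ≠ 0. -/
/-!
Jacobi reduces to `D` being a derivation of `h_m`, which comes down to the shift
`x_i ↦ x_{i+1}` being minus the adjoint of the shift `y_{i+1} ↦ y_i` for the pairing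
`∑ x_i y_i`. For `n^{m+1} = 0`, give `D`, `x_i`, `y_i`, `z` the weights `1`, `i`, `m + 1 - i`,
`m + 1`: the bracket adds weights, so `n^j` lies in weights `> j`, and no weight exceeds `m + 1`.
For `n^m ≠ 0`, `x_{k+1} = [x_k, -D]` puts `x_k` in `n^{k-1}`, hence `z = [x_m, y_m] ∈ n^m`.
-/

noncomputable section

/-- The Heisenberg Lie algebra `h_m` of dimension `2m+1`, in `(x, y, z)`-coordinates. -/
abbrev H (m : ℕ) := (Fin m → ℝ) × (Fin m → ℝ) × ℝ

/-- The Heisenberg bracket: `[x_i, y_i] = z`. -/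
def brH {m : ℕ} (u v : H m) : H m :=
  (0, 0, ∑ i : Fin m, (u.1 i * v.2.1 i - v.1 i * u.2.1 i))

/-- The derivation `D`: `D(x_i) = x_{i+1}` (`i < m`), `D(y_i) = -y_{i-1}` (`i > 1`),
zero otherwise. -/
def D {m : ℕ} (u : H m) : H m :=
  (fun j => if 0 < (j : ℕ) then u.1 ⟨(j : ℕ) - 1, by have := j.2; omega⟩ else 0,
   fun j => if h : (j : ℕ) + 1 < m then -u.2.1 ⟨(j : ℕ) + 1, h⟩ else 0,
   0)

/-- The semidirect product `n = ℝD ⋉ h_m`, of dimension `2m+2`. -/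
abbrev N (m : ℕ) := ℝ × H m

/-- The bracket of `n = ℝD ⋉ h_m`: `[(s,u),(t,v)] = (0, sD(v) - tD(u) + [u,v])`. -/
def brN {m : ℕ} (a b : N m) : N m :=
  (0, a.1 • D b.2 - b.1 • D a.2 + brH a.2 b.2)

/-- Lower central series of a bracket. -/
def lcs {m : ℕ} (μ : N m → N m → N m) : ℕ → Submodule ℝ (N m)
  | 0 => ⊤
  | j + 1 => Submodule.span ℝ {w | ∃ u ∈ lcs μ j, ∃ v, w = μ u v}

section

variable {m : ℕ}

lemma sum_D_fst_mul (u v : H m) :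
    ∑ i, (D u).1 i * v.2.1 i = -∑ i, u.1 i * (D v).2.1 i := by
  cases m with
  | zero => simp
  | succ n =>
    rw [Fin.sum_univ_succ, Fin.sum_univ_castSucc (fun i => u.1 i * (D v).2.1 i)]
    simp [D, Fin.last]
    rfl

/-- `D` is a derivation of `h_m`: `[Du, v] = -[u, Dv] = [Dv, u]`. -/
lemma brH_D_z_comm (u v : H m) : (brH (D u) v).2.2 = (brH (D v) u).2.2 := by
  simp only [brH, Finset.sum_sub_distrib]
  linear_combination sum_D_fst_mul u v - sum_D_fst_mul v u

lemma brN_z (a b : N m) : (brN a b).2.2.2 = (brH a.2 b.2).2.2 := by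
  simp [brN, D]

lemma brH_brN_z (a b : N m) (w : H m) :
    (brH (brN a b).2 w).2.2 = a.1 * (brH (D b.2) w).2.2 - b.1 * (brH (D a.2) w).2.2 := by
  simp only [brH, brN, Finset.mul_sum, ← Finset.sum_sub_distrib]
  refine Finset.sum_congr rfl fun i _ => ?_
  simp only [Prod.fst_add, Prod.fst_sub, Prod.smul_fst, Pi.add_apply, Pi.sub_apply, Pi.smul_apply,
    smul_eq_mul, Pi.zero_apply, add_zero, Prod.snd_add, Prod.snd_sub, Prod.smul_snd]
  ring

theorem brN_jacobi (a b c : N m) :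
    brN (brN a b) c + brN (brN b c) a + brN (brN c a) b = 0 := by
  refine Prod.ext (by simp [brN]) (Prod.ext ?_ (Prod.ext ?_ ?_))
  · funext j
    simp [brN, brH, D]
    split_ifs <;> ring
  · funext j
    simp [brN, brH, D]
    split_ifs <;> ring
  · simp only [Prod.snd_add, Prod.snd_zero, brN_z, brH_brN_z]
    linear_combination a.1 * brH_D_z_comm b.2 c.2 + b.1 * brH_D_z_comm c.2 a.2 +
      c.1 * brH_D_z_comm a.2 b.2

/-- `n` is graded with weights `D ↦ 1`, `x_i ↦ i + 1`, `y_i ↦ m - i`, `z ↦ m + 1` (indices `i`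
counted from `0`); `weightFiltration m j` consists of the elements with no component of weight
`≤ j`. -/
def weightFiltration (m j : ℕ) : Submodule ℝ (N m) where
  carrier := {w | (0 < j → w.1 = 0) ∧ (∀ i : Fin m, (i : ℕ) < j → w.2.1 i = 0) ∧
    (∀ i : Fin m, m ≤ i + j → w.2.2.1 i = 0) ∧ (m < j → w.2.2.2 = 0)}
  add_mem' := by
    rintro a b ⟨ha₁, ha₂, ha₃, ha₄⟩ ⟨hb₁, hb₂, hb₃, hb₄⟩
    refine ⟨fun h => ?_, fun i h => ?_, fun i h => ?_, fun h => ?_⟩ <;> simp_all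
  zero_mem' := by simp
  smul_mem' := by
    rintro r a ⟨ha₁, ha₂, ha₃, ha₄⟩
    refine ⟨fun h => ?_, fun i h => ?_, fun i h => ?_, fun h => ?_⟩ <;> simp_all

lemma weightFiltration_zero (m : ℕ) : weightFiltration m 0 = ⊤ :=
  eq_top_iff.mpr fun _ _ => ⟨by simp, by simp, fun i h => absurd h (by omega), by simp⟩

lemma weightFiltration_eq_bot (m : ℕ) : weightFiltration m (m + 1) = ⊥ := by
  refine eq_bot_iff.mpr fun w ⟨h₁, h₂, h₃, h₄⟩ => (Submodule.mem_bot ℝ).mpr ?_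
  refine Prod.ext (h₁ m.succ_pos) (Prod.ext (funext fun i => h₂ i (by omega))
    (Prod.ext (funext fun i => h₃ i (by omega)) (h₄ m.lt_succ_self)))

lemma brN_mem_weightFiltration {j : ℕ} {u : N m} (hu : u ∈ weightFiltration m j) (v : N m) :
    brN u v ∈ weightFiltration m (j + 1) := by
  obtain ⟨h₁, h₂, h₃, h₄⟩ := hu
  refine ⟨fun _ => rfl, fun i hi => ?_, fun i hi => ?_, fun hj => ?_⟩
  · by_cases hi₀ : 0 < (i : ℕ)
    · simp [brN, brH, D, hi₀, h₁ (by omega), h₂ ⟨i - 1, by omega⟩ (by simp; omega)]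
    · simp [brN, brH, D, hi₀]
  · by_cases hi₁ : (i : ℕ) + 1 < m
    · simp [brN, brH, D, hi₁, h₁ (by omega), h₃ ⟨i + 1, hi₁⟩ (by simp; omega)]
    · simp [brN, brH, D, hi₁]
  · have hx : u.2.1 = 0 := funext fun i => h₂ i (by omega)
    have hy : u.2.2.1 = 0 := funext fun i => h₃ i (by omega)
    simp [brN_z, brH, hx, hy]

lemma lcs_le_of_bracket_mem {μ : N m → N m → N m} {F : ℕ → Submodule ℝ (N m)} (h₀ : F 0 = ⊤)
    (hμ : ∀ j u v, u ∈ F j → μ u v ∈ F (j + 1)) : ∀ j, lcs μ j ≤ F j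
  | 0 => h₀.ge
  | j + 1 => Submodule.span_le.mpr <| by
    rintro _ ⟨u, hu, v, rfl⟩
    exact hμ j u v (lcs_le_of_bracket_mem h₀ hμ j hu)

lemma lcs_brN_succ_eq_bot (m : ℕ) : lcs (brN : N m → N m → N m) (m + 1) = ⊥ :=
  eq_bot_iff.mpr <| (weightFiltration_eq_bot m).le.trans' <|
    lcs_le_of_bracket_mem (weightFiltration_zero m)
      (fun _ _ v hu => brN_mem_weightFiltration hu v) (m + 1)

def xVec (m k : ℕ) : N m := (0, fun i => if (i : ℕ) = k then 1 else 0, 0, 0)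

def yVec (m k : ℕ) : N m := (0, 0, fun i => if (i : ℕ) = k then 1 else 0, 0)

def zVec (m : ℕ) : N m := (0, 0, 0, 1)

lemma brN_xVec_neg_D (m k : ℕ) : brN (xVec m k) (-1, 0) = xVec m (k + 1) := by
  refine Prod.ext rfl (Prod.ext (funext fun i => ?_) (Prod.ext (funext fun i => ?_) ?_))
  · by_cases hi : 0 < (i : ℕ)
    · simp [xVec, brN, brH, D, hi, Nat.sub_eq_iff_eq_add hi]
    · simp [xVec, brN, brH, D, hi]
      omega
  · simp [xVec, brN, brH, D]
  · simp [xVec, brN, brH, D]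

lemma brN_xVec_yVec {k : ℕ} (hk : k < m) : brN (xVec m k) (yVec m k) = zVec m := by
  refine Prod.ext rfl (Prod.ext (funext fun i => ?_) (Prod.ext (funext fun i => ?_) ?_))
  · simp [xVec, yVec, zVec, brN, brH, D]
  · simp [xVec, yVec, zVec, brN, brH, D]
  · rw [brN_z]
    simp only [xVec, yVec, zVec, brH]
    rw [Fintype.sum_eq_single ⟨k, hk⟩ fun i hi => by simp [Fin.ext_iff.not.mp hi]]
    simp

lemma xVec_mem_lcs (m : ℕ) : ∀ k, xVec m k ∈ lcs (brN : N m → N m → N m) k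
  | 0 => Submodule.mem_top
  | k + 1 => Submodule.subset_span ⟨_, xVec_mem_lcs m k, _, (brN_xVec_neg_D m k).symm⟩

lemma zVec_mem_lcs : ∀ m, zVec m ∈ lcs (brN : N m → N m → N m) m
  | 0 => Submodule.mem_top
  | k + 1 => Submodule.subset_span ⟨_, xVec_mem_lcs _ k, _, (brN_xVec_yVec k.lt_succ_self).symm⟩

lemma lcs_brN_ne_bot (m : ℕ) : lcs (brN : N m → N m → N m) m ≠ ⊥ := fun h => by
  have := zVec_mem_lcs m
  rw [h, Submodule.mem_bot] at this
  exact one_ne_zero (congrArg (·.2.2.2) this)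

end

theorem semidirect_product_exactly_m_plus_one_step_general (m : ℕ) :
    (∀ a b c : N m, brN (brN a b) c + brN (brN b c) a + brN (brN c a) b = 0) ∧
    Module.finrank ℝ (N m) = 2 * m + 2 ∧
    lcs (brN : N m → N m → N m) (m + 1) = ⊥ ∧
    lcs (brN : N m → N m → N m) m ≠ ⊥ := by
  refine ⟨brN_jacobi, ?_, lcs_brN_succ_eq_bot m, lcs_brN_ne_bot m⟩
  simp [Module.finrank_prod]
  ring

/-- `n = ℝD ⋉ h_m` is a nilpotent Lie algebra of dimension `2m+2` that is exactly
`(m+1)`-step nilpotent: `n^{m+1} = 0` and `n^m ≠ 0`. -/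
theorem semidirect_product_exactly_m_plus_one_step (m : ℕ) (hm : 1 ≤ m) :
    (∀ a b c : N m, brN (brN a b) c + brN (brN b c) a + brN (brN c a) b = 0) ∧
    Module.finrank ℝ (N m) = 2 * m + 2 ∧
    lcs (brN : N m → N m → N m) (m + 1) = ⊥ ∧
    lcs (brN : N m → N m → N m) m ≠ ⊥ :=
  semidirect_product_exactly_m_plus_one_step_general m
end
end

section
/- For m ≥ 2, the (m+1)-step nilpotent Lie algebra n = ℝD ⋉ h_m of dimension 2m+2 does not satisfy the identity SN_m = 0; i.e., there exist elements u1,...,u_{m+1} in n with [[u1,u2], N_{m-2}(u3,...,u_{m+1})] ≠ 0. Consequently N_{2(m+1),m+1} ⊄ SN_{2(m+1),m}. -/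
/-!
Write `x_i, y_i` for the standard basis of `h_m` and `δ = -D`. Since `[x_i, δ] = x_{i+1}`, the
left-normed bracket `N_{m-2}(x_0, δ, …, δ)` is `x_{m-2}`, while `[δ, y_{m-1}] = y_{m-2}`.
Hence `[[δ, y_{m-1}], N_{m-2}(x_0, δ, …, δ)] = [y_{m-2}, x_{m-2}] = -z ≠ 0`.
-/

noncomputable section

/-- Left-normed brackets for `brN`: `N_0(x_0) = x_0`,
`N_{j+1}(x_0,…,x_{j+1}) = [N_j(x_0,…,x_j), x_{j+1}]`. -/
def leftNormed {m : ℕ} : ℕ → (ℕ → N m) → N m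
  | 0, x => x 0
  | j + 1, x => brN (leftNormed j x) (x (j + 1))

/- Indices are 0-based and `basisX m i = 0` for `i ≥ m`, so that `D x_i = x_{i+1}` holds for
every `i`. -/
def basisX (m i : ℕ) : N m := (0, fun j => if (j : ℕ) = i then 1 else 0, 0, 0)

def basisY (m i : ℕ) : N m := (0, 0, fun j => if (j : ℕ) = i then 1 else 0, 0)

def basisZ (m : ℕ) : N m := (0, 0, 0, 1)

def basisD (m : ℕ) : N m := (1, 0)

lemma basisZ_ne_zero (m : ℕ) : basisZ m ≠ 0 := by
  simp [basisZ, Prod.ext_iff]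

lemma brN_basisX_neg_basisD (m i : ℕ) : brN (basisX m i) (-basisD m) = basisX m (i + 1) := by
  ext j <;> simp [brN, brH, D, basisX, basisD]
  split_ifs <;> first | omega | norm_num

lemma brN_neg_basisD_basisY {m i : ℕ} (hi : i + 1 < m) :
    brN (-basisD m) (basisY m (i + 1)) = basisY m i := by
  ext j <;> simp [brN, brH, D, basisY, basisD]
  split_ifs <;> first | omega | norm_num

lemma brN_basisY_basisX {m i : ℕ} (hi : i < m) : brN (basisY m i) (basisX m i) = -basisZ m := by
  ext j <;> simp [brN, brH, D, basisX, basisY, basisZ]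
  rw [Finset.sum_eq_single_of_mem (⟨i, hi⟩ : Fin m) (Finset.mem_univ _)]
  · simp
  · intro k _ hk
    simp [Fin.ext_iff.not.mp hk]

lemma leftNormed_basisX_neg_basisD (m k : ℕ) :
    leftNormed k (fun i => if i = 0 then basisX m 0 else -basisD m) = basisX m k := by
  induction k with
  | zero => simp [leftNormed]
  | succ k ih => rw [leftNormed, ih, if_neg k.succ_ne_zero, brN_basisX_neg_basisD]

/-- For `m ≥ 2`, the `(m+1)`-step nilpotent Lie algebra `n = ℝD ⋉ h_m` does not satisfy
the identity `SN_m = 0`: there exist `u_1, …, u_{m+1}` with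
`[[u_1,u_2], N_{m-2}(u_3,…,u_{m+1})] ≠ 0`. -/
theorem semidirect_product_not_SN (m : ℕ) (hm : 2 ≤ m) :
    ∃ x : ℕ → N m,
      brN (brN (x 0) (x 1)) (leftNormed (m - 2) (fun i => x (i + 2))) ≠ 0 := by
  obtain ⟨n, rfl⟩ : ∃ n, m = n + 2 := ⟨m - 2, by omega⟩
  let x : ℕ → N (n + 2) := fun i =>
    if i = 1 then basisY _ (n + 1) else if i = 2 then basisX _ 0 else -basisD _
  have htail : (fun i => x (i + 2)) = fun i => if i = 0 then basisX _ 0 else -basisD _ := by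
    funext i
    simp [x]
  refine ⟨x, ?_⟩
  rw [htail, leftNormed_basisX_neg_basisD, Nat.add_sub_cancel]
  change brN (brN (-basisD _) (basisY _ (n + 1))) (basisX _ n) ≠ 0
  rw [brN_neg_basisD_basisY (by omega), brN_basisY_basisX (by omega)]
  exact neg_ne_zero.mpr (basisZ_ne_zero _)
end
end

section
/- For every pair (r,t) ∈ ℝ², the 7-dimensional algebra g_5(r,t) with brackets ab=(1+tr)c, ac=d, ad=f+tg, ae=g, af=−rf+g, bc=e, bd=g, be=rd+f, ce=g satisfies the Jacobi identity, and g_5(r,t) lies in SN_{7,5}, i.e., the identity SN_5 = 0 holds: μ(μ(x1,x2), N_3(μ)(x3,x4,x5,x6)) = 0 for all x1, ..., x6. -/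
noncomputable section

/-- Standard basis vector of `ℝ⁷`. -/
def e (k : Fin 7) : Fin 7 → ℝ := Pi.single k 1

/-- Structure constants of `g₅(r,t)` (basis `a,…,g = e 0,…,e 6`):
`ab=(1+tr)c, ac=d, ad=f+tg, ae=g, af=−rf+g, bc=e, bd=g, be=rd+f, ce=g`,
extended antisymmetrically. -/
def tbl (r t : ℝ) : Fin 7 → Fin 7 → Fin 7 → ℝ :=
  ![![0, (1 + t * r) • e 2, e 3, e 5 + t • e 6, e 6, -r • e 5 + e 6, 0],
    ![-((1 + t * r) • e 2), 0, e 4, e 6, r • e 3 + e 5, 0, 0],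
    ![-e 3, -e 4, 0, 0, e 6, 0, 0],
    ![-(e 5 + t • e 6), -e 6, 0, 0, 0, 0, 0],
    ![-e 6, -(r • e 3 + e 5), -e 6, 0, 0, 0, 0],
    ![-(-r • e 5 + e 6), 0, 0, 0, 0, 0, 0],
    ![0, 0, 0, 0, 0, 0, 0]]

/-- The bracket of `g₅(r,t)`. -/
def br (r t : ℝ) (x y : Fin 7 → ℝ) : Fin 7 → ℝ :=
  ∑ p : Fin 7, ∑ q : Fin 7, (x p * y q) • tbl r t p q

@[simp] lemma cv7_1 {α : Type*} (x : α) (u : Fin 6 → α) : Matrix.vecCons x u 1 = u 0 := rfl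
@[simp] lemma cv7_2 {α : Type*} (x : α) (u : Fin 6 → α) : Matrix.vecCons x u 2 = u 1 := rfl
@[simp] lemma cv7_3 {α : Type*} (x : α) (u : Fin 6 → α) : Matrix.vecCons x u 3 = u 2 := rfl
@[simp] lemma cv7_4 {α : Type*} (x : α) (u : Fin 6 → α) : Matrix.vecCons x u 4 = u 3 := rfl
@[simp] lemma cv7_5 {α : Type*} (x : α) (u : Fin 6 → α) : Matrix.vecCons x u 5 = u 4 := rfl
@[simp] lemma cv7_6 {α : Type*} (x : α) (u : Fin 6 → α) : Matrix.vecCons x u 6 = u 5 := rfl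
@[simp] lemma cv6_1 {α : Type*} (x : α) (u : Fin 5 → α) : Matrix.vecCons x u 1 = u 0 := rfl
@[simp] lemma cv6_2 {α : Type*} (x : α) (u : Fin 5 → α) : Matrix.vecCons x u 2 = u 1 := rfl
@[simp] lemma cv6_3 {α : Type*} (x : α) (u : Fin 5 → α) : Matrix.vecCons x u 3 = u 2 := rfl
@[simp] lemma cv6_4 {α : Type*} (x : α) (u : Fin 5 → α) : Matrix.vecCons x u 4 = u 3 := rfl
@[simp] lemma cv6_5 {α : Type*} (x : α) (u : Fin 5 → α) : Matrix.vecCons x u 5 = u 4 := rfl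
@[simp] lemma cv5_1 {α : Type*} (x : α) (u : Fin 4 → α) : Matrix.vecCons x u 1 = u 0 := rfl
@[simp] lemma cv5_2 {α : Type*} (x : α) (u : Fin 4 → α) : Matrix.vecCons x u 2 = u 1 := rfl
@[simp] lemma cv5_3 {α : Type*} (x : α) (u : Fin 4 → α) : Matrix.vecCons x u 3 = u 2 := rfl
@[simp] lemma cv5_4 {α : Type*} (x : α) (u : Fin 4 → α) : Matrix.vecCons x u 4 = u 3 := rfl
@[simp] lemma cv4_1 {α : Type*} (x : α) (u : Fin 3 → α) : Matrix.vecCons x u 1 = u 0 := rfl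
@[simp] lemma cv4_2 {α : Type*} (x : α) (u : Fin 3 → α) : Matrix.vecCons x u 2 = u 1 := rfl
@[simp] lemma cv4_3 {α : Type*} (x : α) (u : Fin 3 → α) : Matrix.vecCons x u 3 = u 2 := rfl
@[simp] lemma cv3_1 {α : Type*} (x : α) (u : Fin 2 → α) : Matrix.vecCons x u 1 = u 0 := rfl
@[simp] lemma cv3_2 {α : Type*} (x : α) (u : Fin 2 → α) : Matrix.vecCons x u 2 = u 1 := rfl
@[simp] lemma cv2_1 {α : Type*} (x : α) (u : Fin 1 → α) : Matrix.vecCons x u 1 = u 0 := rfl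

set_option maxHeartbeats 1000000 in
lemma br_apply (r t : ℝ) (x y : Fin 7 → ℝ) :
    br r t x y = ![0, 0,
      (1 + t*r) * (x 0 * y 1 - x 1 * y 0),
      (x 0 * y 2 - x 2 * y 0) + r * (x 1 * y 4 - x 4 * y 1),
      x 1 * y 2 - x 2 * y 1,
      (x 0 * y 3 - x 3 * y 0) + (x 1 * y 4 - x 4 * y 1) - r * (x 0 * y 5 - x 5 * y 0),
      t * (x 0 * y 3 - x 3 * y 0) + (x 0 * y 4 - x 4 * y 0) + (x 0 * y 5 - x 5 * y 0)
        + (x 1 * y 3 - x 3 * y 1) + (x 2 * y 4 - x 4 * y 2)] := by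
  funext k
  fin_cases k <;>
    simp [br, tbl, e, Fin.sum_univ_seven, Pi.single_apply, Matrix.vecHead, Matrix.vecTail] <;>
    ring

lemma br_zero (r t : ℝ) (x y : Fin 7 → ℝ) (hx0 : x 0 = 0) (hx1 : x 1 = 0)
    (hy0 : y 0 = 0) (hy1 : y 1 = 0) (hy2 : y 2 = 0) (hy4 : y 4 = 0) :
    br r t x y = 0 := by
  funext k
  fin_cases k <;> simp [br_apply, hx0, hx1, hy0, hy1, hy2, hy4]

/-- For every `(r,t) ∈ ℝ²` the algebra `g₅(r,t)` satisfies the Jacobi identity, and the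
identity `SN₅ = 0` holds: `μ(μ(x₁,x₂), N₃(μ)(x₃,x₄,x₅,x₆)) = 0` for all `xᵢ`, where
`N₃(μ)(x₃,x₄,x₅,x₆) = μ(μ(μ(x₃,x₄),x₅),x₆)`; i.e. `g₅(r,t) ∈ SN_{7,5}`. -/
theorem g5_jacobi_and_SN5 (r t : ℝ) :
    (∀ x y z : Fin 7 → ℝ,
      br r t (br r t x y) z + br r t (br r t y z) x + br r t (br r t z x) y = 0) ∧
    (∀ x1 x2 x3 x4 x5 x6 : Fin 7 → ℝ,
      br r t (br r t x1 x2) (br r t (br r t (br r t x3 x4) x5) x6) = 0) := by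

  constructor
  · intro x y z
    funext k
    fin_cases k <;> simp [br_apply] <;> ring
  · intro x1 x2 x3 x4 x5 x6
    have h0 : ∀ x y : Fin 7 → ℝ, br r t x y 0 = 0 := fun x y => by simp [br_apply]
    have h1 : ∀ x y : Fin 7 → ℝ, br r t x y 1 = 0 := fun x y => by simp [br_apply]
    apply br_zero
    · exact h0 _ _
    · exact h1 _ _
    · exact h0 _ _
    · exact h1 _ _
    · -- component 2 of br B x6, with B = br (br x3 x4) x5 having B 0 = B 1 = 0
      simp [br_apply, h0, h1]
    · -- component 4 of br B x6, need B 1 = 0 and B 2 = 0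
      have hB2 : br r t (br r t x3 x4) x5 2 = 0 := by simp [br_apply, h0, h1]
      simp [br_apply, h0, h1, hB2]
end
end
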